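/- arXiv:2210.06406 — 4 statements merged into one kernel-verified Lean document; each statement's English description precedes it below -/
import Mathlib

section
/- Let n ≥ 1 and let R be an n × n real upper triangular matrix (R i j = 0 whenever i > j) such that the linear map of Euclidean ℝⁿ induced by R has operator norm at most 1 and |det R| = 1. Then R is a diagonal matrix and every diagonal entry of R equals 1 or −1. -/
/-!
The image of the `j`-th standard basis vector is the `j`-th column, so operator norm at most `1`
bounds the sum of squares of every column by `1`; in particular `|R j j| ≤ 1` for all `j`.
For an upper triangular `R` the determinant is the product of the diagonal entries, and a product
of numbers of modulus at most `1` has modulus `1` only if each factor does. Then `R j j ^ 2 = 1`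
already exhausts the bound on column `j`, so all other entries of that column vanish.
-/

open Finset

theorem Finset.abs_eq_one_of_abs_prod_eq_one {ι : Type*} [DecidableEq ι] {s : Finset ι} {f : ι → ℝ}
    (hle : ∀ i ∈ s, |f i| ≤ 1) (hprod : |∏ i ∈ s, f i| = 1) {i : ι} (hi : i ∈ s) :
    |f i| = 1 := by
  refine le_antisymm (hle i hi) (not_lt.mp fun hlt => ?_)
  have hrest : ∏ k ∈ s.erase i, |f k| ≤ 1 :=
    prod_le_one (fun k _ => abs_nonneg _) fun k hk => hle k (mem_of_mem_erase hk)
  have : |∏ i ∈ s, f i| < 1 :=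
    calc |∏ i ∈ s, f i| = |f i| * ∏ k ∈ s.erase i, |f k| := by
          rw [abs_prod, mul_prod_erase s (fun k => |f k|) hi]
      _ ≤ |f i| * 1 := by gcongr
      _ < 1 := by rwa [mul_one]
  exact this.ne hprod

theorem Finset.eq_zero_of_sum_sq_le_sq {ι : Type*} [Fintype ι] [DecidableEq ι] {f : ι → ℝ} {j : ι}
    (hsum : ∑ k, f k ^ 2 ≤ f j ^ 2) {i : ι} (hij : i ≠ j) : f i = 0 := by
  have hrest : ∑ k ∈ univ.erase j, f k ^ 2 ≤ 0 := by
    rw [← add_sum_erase univ (fun k => f k ^ 2) (mem_univ j)] at hsum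
    linarith
  have := (sum_eq_zero_iff_of_nonneg fun k _ => sq_nonneg (f k)).mp
    (hrest.antisymm (sum_nonneg fun k _ => sq_nonneg (f k))) i (mem_erase.mpr ⟨hij, mem_univ i⟩)
  exact pow_eq_zero_iff two_ne_zero |>.mp this

namespace Matrix

variable {m n : Type*} [Fintype n] [DecidableEq n]

theorem toEuclideanLin_single_one (A : Matrix m n ℝ) (j : n) :
    toEuclideanLin A (EuclideanSpace.single j 1) = WithLp.toLp 2 (A.col j) := by
  simp [toLpLin_apply]

theorem sum_sq_apply_le_sq_opNorm [Fintype m] (A : Matrix m n ℝ) (j : n) :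
    ∑ i, A i j ^ 2 ≤ ‖LinearMap.toContinuousLinearMap (toEuclideanLin A)‖ ^ 2 := by
  set f := LinearMap.toContinuousLinearMap (toEuclideanLin A)
  have hle : ‖f (EuclideanSpace.single j 1)‖ ≤ ‖f‖ := by
    simpa using f.le_opNorm (EuclideanSpace.single j 1)
  calc ∑ i, A i j ^ 2 = ‖f (EuclideanSpace.single j 1)‖ ^ 2 := by
        simp [f, toEuclideanLin_single_one, EuclideanSpace.real_norm_sq_eq]
    _ ≤ ‖f‖ ^ 2 := by gcongr

end Matrix

theorem stmt_1_general (n : ℕ) (R : Matrix (Fin n) (Fin n) ℝ)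
    (htri : ∀ i j : Fin n, j < i → R i j = 0)
    (hnorm : ‖LinearMap.toContinuousLinearMap (Matrix.toEuclideanLin R)‖ ≤ 1)
    (hdet : |R.det| = 1) :
    (∀ i j : Fin n, i ≠ j → R i j = 0) ∧ (∀ i : Fin n, R i i = 1 ∨ R i i = -1) := by
  have hcol (j : Fin n) : ∑ i, R i j ^ 2 ≤ 1 :=
    (R.sum_sq_apply_le_sq_opNorm j).trans (pow_le_one₀ (norm_nonneg _) hnorm)
  have hdiag_le (i : Fin n) : |R i i| ≤ 1 := by
    rw [← sq_le_one_iff_abs_le_one]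
    exact (single_le_sum (fun k _ => sq_nonneg (R k i)) (mem_univ i)).trans (hcol i)
  have hprod : |∏ i, R i i| = 1 := R.det_of_isUpperTriangular htri ▸ hdet
  have hdiag (i : Fin n) : |R i i| = 1 :=
    abs_eq_one_of_abs_prod_eq_one (fun i _ => hdiag_le i) hprod (mem_univ i)
  refine ⟨fun i j hij => ?_, fun i => abs_eq (zero_le_one' ℝ) |>.mp (hdiag i)⟩
  have hjj : R j j ^ 2 = 1 := by rw [← sq_abs, hdiag j, one_pow]
  exact eq_zero_of_sum_sq_le_sq (f := fun k => R k j) (hjj ▸ hcol j) hij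

/-- An `n × n` real upper triangular matrix (`n ≥ 1`) inducing a linear map of
Euclidean `ℝⁿ` of operator norm at most `1` and with `|det R| = 1` is diagonal with all diagonal
entries equal to `1` or `-1`. -/
theorem stmt_1 (n : ℕ) (hn : 1 ≤ n) (R : Matrix (Fin n) (Fin n) ℝ)
    (htri : ∀ i j : Fin n, j < i → R i j = 0)
    (hnorm : ‖LinearMap.toContinuousLinearMap (Matrix.toEuclideanLin R)‖ ≤ 1)
    (hdet : |R.det| = 1) :
    (∀ i j : Fin n, i ≠ j → R i j = 0) ∧ (∀ i : Fin n, R i i = 1 ∨ R i i = -1) :=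
  stmt_1_general n R htri hnorm hdet
end

section
/- Let n ≥ 1, let E ⊆ ℝⁿ be a nonempty open connected set, and let ψ : E → ℝⁿ be a C¹ map such that ‖Dψ(x)‖ ≤ 1 (operator norm) for all x ∈ E and |det Dψ(x)| = 1 for Lebesgue-almost every x ∈ E. Then ψ coincides on E with the restriction of an affine isometry of ℝⁿ: there exist a linear isometry A of ℝⁿ and a vector b ∈ ℝⁿ such that ψ(x) = A x + b for all x ∈ E. In particular ‖ψ(x) − ψ(y)‖ = ‖x − y‖ for all x, y ∈ E. -/
/-!
A linear map `A` with `‖A‖ ≤ 1` and `|det A| = 1` is orthogonal: the eigenvalues of `A* A` lie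
in `[0, 1]` and multiply to `det (A* A) = |det A| ^ 2 = 1`. As `Dψ` is continuous, the
determinant condition holds everywhere on `E`, so `Dψ(x)` is orthogonal for every `x ∈ E`.
Near a point `a`, both `ψ` and its local inverse (inverse function theorem) then have derivatives
of norm `≤ 1`, so `ψ` preserves distances on a ball around `a`. Differentiating
`‖ψ z - ψ y‖² = ‖z - y‖²` at `z = a` and using that `Dψ(a)` is onto gives
`ψ a - ψ y = Dψ(a) (a - y)`: `ψ` is affine near `a`. So `Dψ` is locally constant, hence constant
on the connected set `E`, and `ψ` is affine on `E`.
-/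

open Filter Finset Metric Topology RealInnerProductSpace ContinuousLinearMap MeasureTheory

theorem Real.eq_one_of_prod_eq_one_of_le_one {ι : Type*} [Fintype ι] {μ : ι → ℝ}
    (h0 : ∀ i, 0 ≤ μ i) (h1 : ∀ i, μ i ≤ 1) (hprod : ∏ i, μ i = 1) (i : ι) : μ i = 1 := by
  lift μ to ι → NNReal using h0
  rw [← NNReal.coe_prod, NNReal.coe_eq_one] at hprod
  have h1' (j) : μ j ≤ 1 := mod_cast h1 j
  exact congrArg _ ((prod_eq_one_iff_of_le_one' fun j _ ↦ h1' j).mp hprod i (mem_univ i))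

section InnerProductSpace

variable {V W : Type*} [NormedAddCommGroup V] [InnerProductSpace ℝ V]
  [NormedAddCommGroup W] [InnerProductSpace ℝ W]

theorem HasFDerivAt.inner_sub_map_eq_of_norm_sub_eq {f : V → W} {f' : V →L[ℝ] W} {x y : V}
    (hf : HasFDerivAt f f' x) (h : ∀ᶠ z in 𝓝 x, ‖f z - f y‖ = ‖z - y‖) (v : V) :
    ⟪f x - f y, f' v⟫ = ⟪x - y, v⟫ := by
  have hF := (hf.sub_const (f y)).norm_sq.sub ((hasFDerivAt_id x).sub_const y).norm_sq
  have h0 : HasFDerivAt (fun z ↦ ‖f z - f y‖ ^ 2 - ‖z - y‖ ^ 2) (0 : V →L[ℝ] ℝ) x :=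
    (hasFDerivAt_const 0 x).congr_of_eventuallyEq (h.mono fun z hz ↦ by simp [hz])
  have := congrArg (· v) (hF.unique h0)
  simp only [map_sub, ContinuousLinearMap.sub_comp, id_eq, ContinuousLinearMap.comp_id, sub_apply,
    smul_apply, ContinuousLinearMap.comp_apply, coe_innerSL_apply, nsmul_eq_mul, Nat.cast_ofNat,
    zero_apply] at this
  rw [inner_sub_left, inner_sub_left]
  linarith

theorem HasFDerivAt.sub_eq_map_sub_of_norm_sub_eq {f : V → W} {f' : V →L[ℝ] W} {x y : V}
    (hf : HasFDerivAt f f' x) (hf' : ∀ v, ‖f' v‖ = ‖v‖) (hsurj : Function.Surjective f')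
    (h : ∀ᶠ z in 𝓝 x, ‖f z - f y‖ = ‖z - y‖) : f x - f y = f' (x - y) := by
  refine ext_inner_right ℝ fun w ↦ ?_
  obtain ⟨v, rfl⟩ := hsurj w
  rw [hf.inner_sub_map_eq_of_norm_sub_eq h, (LinearMap.norm_map_iff_inner_map_map f').mp hf']

end InnerProductSpace

section FiniteDimensional

variable {V : Type*} [NormedAddCommGroup V] [InnerProductSpace ℝ V] [FiniteDimensional ℝ V]

theorem ContinuousLinearMap.norm_map_of_opNorm_le_one_of_abs_det_eq_one (A : V →L[ℝ] V)
    (hA : ‖A‖ ≤ 1) (hdet : |A.det| = 1) (v : V) : ‖A v‖ = ‖v‖ := by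
  revert v
  rw [A.norm_map_iff_adjoint_comp_self]
  have hT := A.isPositive_adjoint_comp_self.toLinearMap
  set T := adjoint A ∘L A
  set b := hT.isSymmetric.eigenvectorBasis rfl
  set μ := hT.isSymmetric.eigenvalues rfl
  have hTb (i) : T (b i) = μ i • b i := hT.isSymmetric.apply_eigenvectorBasis rfl i
  have hμ_le (i) : μ i ≤ 1 := by
    have hμ_eq : μ i = ‖A (b i)‖ ^ 2 := by
      rw [← real_inner_self_eq_norm_sq, ← adjoint_inner_left, ← comp_apply, hTb,
        real_inner_smul_left, real_inner_self_eq_norm_sq, b.orthonormal.1 i, one_pow, mul_one]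
    calc μ i = ‖A (b i)‖ ^ 2 := hμ_eq
      _ ≤ (‖A‖ * ‖b i‖) ^ 2 := by gcongr; exact A.le_opNorm _
      _ ≤ 1 := by rw [b.orthonormal.1 i, mul_one]; exact pow_le_one₀ (norm_nonneg _) hA
  have hdetT : ∏ i, μ i = 1 := by
    have hdetT : T.det = 1 := by
      have hdetA : |LinearMap.det (A : V →ₗ[ℝ] V)| = 1 := hdet
      rw [← A.normDet_sq, LinearMap.normDet_eq_abs_det, hdetA]
      simp
    simpa [ContinuousLinearMap.det, hT.isSymmetric.det_eq_prod_eigenvalues rfl] using hdetT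
  have hμ (i) : μ i = 1 :=
    Real.eq_one_of_prod_eq_one_of_le_one (hT.nonneg_eigenvalues rfl) hμ_le hdetT i
  refine coe_injective (b.toBasis.ext fun i ↦ ?_)
  simp [hTb, hμ]

noncomputable def ContinuousLinearMap.toLinearIsometryEquivOfNormMap (A : V →L[ℝ] V)
    (hA : ∀ v, ‖A v‖ = ‖v‖) : V ≃ₗᵢ[ℝ] V :=
  LinearIsometry.toLinearIsometryEquiv ⟨A.toLinearMap, hA⟩ rfl

theorem ContDiffOn.exists_ball_norm_sub_le_norm_image_sub {f : V → V} {U : Set V} (hU : IsOpen U)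
    (hf : ContDiffOn ℝ 1 f U) (hiso : ∀ x ∈ U, ∀ v, ‖fderiv ℝ f x v‖ = ‖v‖) {a : V} (ha : a ∈ U) :
    ∃ ρ > 0, ∀ x ∈ ball a ρ, ∀ y ∈ ball a ρ, ‖x - y‖ ≤ ‖f x - f y‖ := by
  let L (x : V) (hx : x ∈ U) : V ≃L[ℝ] V :=
    ((fderiv ℝ f x).toLinearIsometryEquivOfNormMap (hiso x hx)).toContinuousLinearEquiv
  have hL (x : V) (hx : x ∈ U) : HasFDerivAt f (L x hx : V →L[ℝ] V) x :=
    ((hf.differentiableOn one_ne_zero x hx).differentiableAt (hU.mem_nhds hx)).hasFDerivAt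
  have hL_symm (x : V) (hx : x ∈ U) (v : V) : ‖(L x hx).symm v‖ = ‖v‖ :=
    ((fderiv ℝ f x).toLinearIsometryEquivOfNormMap (hiso x hx)).symm.norm_map v
  have hS : HasStrictFDerivAt f (L a ha : V →L[ℝ] V) a :=
    (hf.contDiffAt (hU.mem_nhds ha)).hasStrictFDerivAt one_ne_zero
  set e := hS.toOpenPartialHomeomorph f
  have he : (e : V → V) = f := hS.toOpenPartialHomeomorph_coe
  have ha_src : a ∈ e.source := hS.mem_toOpenPartialHomeomorph_source
  have hleft : ∀ x ∈ e.source, e.symm (f x) = x := fun x hx ↦ he ▸ e.left_inv hx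
  have hfa : e.symm (f a) = a := hleft a ha_src
  obtain ⟨r, hr, hr_sub⟩ := isOpen_iff.mp (e.isOpen_inter_preimage_symm hU) (f a)
    ⟨hS.image_mem_toOpenPartialHomeomorph_target, by rwa [Set.mem_preimage, hfa]⟩
  have hsymm_lip : ∀ y ∈ ball (f a) r, ∀ z ∈ ball (f a) r, ‖e.symm y - e.symm z‖ ≤ ‖y - z‖ := by
    have hsymm (y) (hy : y ∈ ball (f a) r) :
        HasFDerivAt e.symm ((L _ (hr_sub hy).2).symm : V →L[ℝ] V) y :=
      e.hasFDerivAt_symm (hr_sub hy).1 (hL _ (hr_sub hy).2)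
    intro y hy z hz
    simpa using (convex_ball (f a) r).norm_image_sub_le_of_norm_fderiv_le (C := 1)
      (fun w hw ↦ (hsymm w hw).differentiableAt)
      (fun w hw ↦ by
        rw [(hsymm w hw).fderiv]
        exact opNorm_le_bound _ zero_le_one fun v ↦
          (hL_symm _ (hr_sub hw).2 v).trans_le (one_mul _).ge)
      hz hy
  obtain ⟨ρ, hρ, hρ_sub⟩ := isOpen_iff.mp
    (e.continuousOn.isOpen_inter_preimage e.open_source isOpen_ball) a
    ⟨ha_src, mem_ball_self hr⟩
  refine ⟨ρ, hρ, fun x hx y hy ↦ ?_⟩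
  simpa [he, hleft x (hρ_sub hx).1, hleft y (hρ_sub hy).1] using
    hsymm_lip _ (hρ_sub hx).2 _ (hρ_sub hy).2

theorem ContDiffOn.exists_ball_norm_image_sub_eq {f : V → V} {U : Set V} (hU : IsOpen U)
    (hf : ContDiffOn ℝ 1 f U) (hiso : ∀ x ∈ U, ∀ v, ‖fderiv ℝ f x v‖ = ‖v‖) {a : V} (ha : a ∈ U) :
    ∃ ρ > 0, ∀ x ∈ ball a ρ, ∀ y ∈ ball a ρ, ‖f x - f y‖ = ‖x - y‖ := by
  obtain ⟨ρ₁, hρ₁, hle⟩ := hf.exists_ball_norm_sub_le_norm_image_sub hU hiso ha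
  obtain ⟨ρ₂, hρ₂, hρ₂U⟩ := isOpen_iff.mp hU a ha
  have hball : ball a (min ρ₁ ρ₂) ⊆ U := (ball_subset_ball (min_le_right _ _)).trans hρ₂U
  refine ⟨min ρ₁ ρ₂, lt_min hρ₁ hρ₂, fun x hx y hy ↦ le_antisymm ?_ ?_⟩
  · simpa using (convex_ball a _).norm_image_sub_le_of_norm_fderiv_le (C := 1)
      (fun z hz ↦ hf.differentiableOn one_ne_zero z (hball hz) |>.differentiableAt
        (hU.mem_nhds (hball hz)))
      (fun z hz ↦ opNorm_le_bound _ zero_le_one fun v ↦ by rw [one_mul, hiso z (hball hz)])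
      hy hx
  · exact hle x (ball_subset_ball (min_le_left _ _) hx) y (ball_subset_ball (min_le_left _ _) hy)

theorem ContDiffOn.eventuallyEq_fderiv_apply_sub_add {f : V → V} {U : Set V} (hU : IsOpen U)
    (hf : ContDiffOn ℝ 1 f U) (hiso : ∀ x ∈ U, ∀ v, ‖fderiv ℝ f x v‖ = ‖v‖) {a : V} (ha : a ∈ U) :
    f =ᶠ[𝓝 a] fun x ↦ fderiv ℝ f a (x - a) + f a := by
  obtain ⟨ρ, hρ, hdist⟩ := hf.exists_ball_norm_image_sub_eq hU hiso ha
  have hfa : HasFDerivAt f (fderiv ℝ f a) a :=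
    ((hf.differentiableOn one_ne_zero a ha).differentiableAt (hU.mem_nhds ha)).hasFDerivAt
  filter_upwards [ball_mem_nhds a hρ] with y hy
  have key := hfa.sub_eq_map_sub_of_norm_sub_eq (hiso a ha)
    ((fderiv ℝ f a).toLinearIsometryEquivOfNormMap (hiso a ha)).surjective
    (mem_of_superset (ball_mem_nhds a hρ) fun z hz ↦ hdist z hz y hy)
  rw [← neg_sub a y, map_neg, ← key]
  abel

theorem ContDiffOn.fderiv_eq_of_norm_fderiv_apply_eq {f : V → V} {U : Set V} (hU : IsOpen U)
    (hU' : IsPreconnected U) (hf : ContDiffOn ℝ 1 f U)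
    (hiso : ∀ x ∈ U, ∀ v, ‖fderiv ℝ f x v‖ = ‖v‖) {x y : V} (hx : x ∈ U) (hy : y ∈ U) :
    fderiv ℝ f x = fderiv ℝ f y := by
  have hD_loc (a) (ha : a ∈ U) : fderiv ℝ f =ᶠ[𝓝 a] fun _ ↦ fderiv ℝ f a :=
    (hf.eventuallyEq_fderiv_apply_sub_add hU hiso ha).eventuallyEq_nhds.mono fun z hz ↦ by
      rw [hz.fderiv_eq]
      simp [fderiv_sub_const]
  refine hU.is_const_of_fderiv_eq_zero (𝕜 := ℝ) hU' (fun z hz ↦ ?_) (fun z hz ↦ ?_) hx hy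
  · exact ((hD_loc z hz).differentiableAt_iff.mpr (differentiableAt_const _)).differentiableWithinAt
  · rw [(hD_loc z hz).fderiv_eq, fderiv_fun_const, Pi.zero_apply]

theorem ContDiffOn.exists_linearIsometry_eqOn {f : V → V} {U : Set V} (hU : IsOpen U)
    (hU' : IsPreconnected U) (hf : ContDiffOn ℝ 1 f U)
    (hiso : ∀ x ∈ U, ∀ v, ‖fderiv ℝ f x v‖ = ‖v‖) :
    ∃ (A : V →ₗᵢ[ℝ] V) (b : V), U.EqOn f fun x ↦ A x + b := by
  obtain rfl | ⟨x₀, hx₀⟩ := U.eq_empty_or_nonempty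
  · exact ⟨LinearIsometry.id, 0, Set.eqOn_empty _ _⟩
  let A : V →ₗᵢ[ℝ] V := ⟨(fderiv ℝ f x₀).toLinearMap, hiso x₀ hx₀⟩
  obtain ⟨b, hb⟩ := hU.exists_eq_add_of_fderiv_eq hU' (hf.differentiableOn one_ne_zero)
    A.toContinuousLinearMap.differentiableOn fun x hx ↦ by
      rw [hf.fderiv_eq_of_norm_fderiv_apply_eq hU hU' hiso hx hx₀, ContinuousLinearMap.fderiv]
      rfl
  exact ⟨A, b, hb⟩

end FiniteDimensional

theorem stmt_3_general (n : ℕ) (E : Set (EuclideanSpace ℝ (Fin n)))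
    (hE_open : IsOpen E) (hE_conn : IsConnected E)
    (ψ : EuclideanSpace ℝ (Fin n) → EuclideanSpace ℝ (Fin n))
    (hψ : ContDiffOn ℝ 1 ψ E)
    (hnorm : ∀ x ∈ E, ‖fderiv ℝ ψ x‖ ≤ 1)
    (hdet : ∀ᵐ x ∂(volume.restrict E), |(fderiv ℝ ψ x).det| = 1) :
    ∃ (A : EuclideanSpace ℝ (Fin n) →ₗᵢ[ℝ] EuclideanSpace ℝ (Fin n))
      (b : EuclideanSpace ℝ (Fin n)),
      (∀ x ∈ E, ψ x = A x + b) ∧ ∀ x ∈ E, ∀ y ∈ E, ‖ψ x - ψ y‖ = ‖x - y‖ := by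
  have hdet_eq : E.EqOn (fun x ↦ |(fderiv ℝ ψ x).det|) fun _ ↦ 1 :=
    Measure.eqOn_open_of_ae_eq hdet hE_open
      ((continuous_abs.comp continuous_det).comp_continuousOn
        (hψ.continuousOn_fderiv_of_isOpen hE_open le_rfl)) continuousOn_const
  have hiso (x) (hx : x ∈ E) : ∀ v, ‖fderiv ℝ ψ x v‖ = ‖v‖ :=
    (fderiv ℝ ψ x).norm_map_of_opNorm_le_one_of_abs_det_eq_one (hnorm x hx) (hdet_eq hx)
  obtain ⟨A, b, hAb⟩ := hψ.exists_linearIsometry_eqOn hE_open hE_conn.isPreconnected hiso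
  refine ⟨A, b, hAb, fun x hx y hy ↦ ?_⟩
  rw [hAb hx, hAb hy, add_sub_add_right_eq_sub, ← map_sub, A.norm_map]

/-- If `ψ` is `C¹` on a nonempty open connected set `E ⊆ ℝⁿ` (`n ≥ 1`), with
`‖Dψ(x)‖ ≤ 1` everywhere on `E` and `|det Dψ(x)| = 1` a.e. on `E`, then `ψ` coincides on `E` with
an affine isometry `x ↦ A x + b`; in particular `ψ` preserves distances on `E`. -/
theorem stmt_3 (n : ℕ) (hn : 1 ≤ n) (E : Set (EuclideanSpace ℝ (Fin n)))
    (hE_ne : E.Nonempty) (hE_open : IsOpen E) (hE_conn : IsConnected E)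
    (ψ : EuclideanSpace ℝ (Fin n) → EuclideanSpace ℝ (Fin n))
    (hψ : ContDiffOn ℝ 1 ψ E)
    (hnorm : ∀ x ∈ E, ‖fderiv ℝ ψ x‖ ≤ 1)
    (hdet : ∀ᵐ x ∂(volume.restrict E), |(fderiv ℝ ψ x).det| = 1) :
    ∃ (A : EuclideanSpace ℝ (Fin n) →ₗᵢ[ℝ] EuclideanSpace ℝ (Fin n))
      (b : EuclideanSpace ℝ (Fin n)),
      (∀ x ∈ E, ψ x = A x + b) ∧ ∀ x ∈ E, ∀ y ∈ E, ‖ψ x - ψ y‖ = ‖x - y‖ :=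
  stmt_3_general n E hE_open hE_conn ψ hψ hnorm hdet
end

section
/- Let n ≥ 1, let A₁, A₂ ⊆ ℝⁿ be Lebesgue measurable sets, let a₁ be a Lebesgue density point of A₁ and a₂ a Lebesgue density point of A₂ with a₁ ≠ a₂, and set v = (a₂ − a₁)/‖a₂ − a₁‖. Then, denoting by p_v the orthogonal projection of ℝⁿ onto the hyperplane v⊥ = {x ∈ ℝⁿ : ⟨x, v⟩ = 0}, the set p_v(A₁) ∩ p_v(A₂) has positive (n−1)-dimensional Hausdorff outer measure: ℋ^{n−1}(p_v(A₁) ∩ p_v(A₂)) > 0. -/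
/-!
Split `V` measure-preservingly as `K × Kᗮ` via the orthogonal projections `P` and `Q`. The cylinder
`P⁻¹ B(P b, ρ) ∩ Q⁻¹ B(Q b, ρ)` lies between the balls `B(b, ρ)` and `B(b, 2ρ)`, so at a density
point `b` of `B` only an `o(1)` proportion of it misses `B`. By Fubini, the points of `B(P b, ρ)`
whose whole fibre misses `B` form an `o(1)` proportion of `B(P b, ρ)`: the shadow `P(B)` fills
almost all of that ball. For `K = v⊥` the density points `a₁, a₂` have the same shadow centre, so
the two shadows overlap in positive volume on `K`, which is a nonzero multiple of `μH[dim K]`.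
-/

open MeasureTheory Measure Filter Metric Set Module
open scoped ENNReal Topology

def IsDensityPoint {X : Type*} [PseudoMetricSpace X] [MeasurableSpace X] (μ : Measure X)
    (A : Set X) (x : X) : Prop :=
  Tendsto (fun r : ℝ => μ (A ∩ closedBall x r) / μ (closedBall x r)) (𝓝[>] 0) (𝓝 1)

theorem IsDensityPoint.eventually_measure_closedBall_sdiff_le {X : Type*} [PseudoMetricSpace X]
    [ProperSpace X] [MeasurableSpace X] {μ : Measure X} [IsFiniteMeasureOnCompacts μ]
    {A : Set X} {x : X} (h : IsDensityPoint μ A x) (hA : MeasurableSet A) {ε : ℝ≥0∞}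
    (hε : ε ≠ 0) : ∀ᶠ r in 𝓝[>] 0, μ (closedBall x r \ A) ≤ ε * μ (closedBall x r) := by
  have h1 : 1 - ε < 1 := ENNReal.sub_lt_self ENNReal.one_ne_top one_ne_zero hε
  filter_upwards [h.eventually (eventually_gt_nhds h1)] with r hr
  have hfin : μ (closedBall x r) ≠ ⊤ := measure_closedBall_lt_top.ne
  have hlarge : (1 - ε) * μ (closedBall x r) ≤ μ (closedBall x r ∩ A) := by
    rw [inter_comm]
    exact ((ENNReal.lt_div_iff_mul_lt (Or.inr h1.ne_top) (Or.inl hfin)).1 hr).le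
  refine (ENNReal.add_le_add_iff_left
    (measure_ne_top_of_subset (t := closedBall x r ∩ A) inter_subset_left hfin)).1 ?_
  calc μ (closedBall x r ∩ A) + μ (closedBall x r \ A) = μ (closedBall x r) :=
        measure_inter_add_sdiff _ hA
    _ ≤ (1 - ε + ε) * μ (closedBall x r) := le_mul_of_one_le_left' le_tsub_add
    _ ≤ μ (closedBall x r ∩ A) + ε * μ (closedBall x r) := by rw [add_mul]; gcongr

theorem measure_sdiff_image_fst_mul_le {X Y : Type*} [MeasurableSpace X] [MeasurableSpace Y]
    (μ : Measure X) (ν : Measure Y) [SFinite ν] {B : Set (X × Y)} {D : Set X} {I : Set Y}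
    (hB : MeasurableSet B) (hD : MeasurableSet D) (hI : MeasurableSet I) :
    μ (D \ Prod.fst '' B) * ν I ≤ μ.prod ν (D ×ˢ I \ B) := by
  have hW : MeasurableSet (D ×ˢ I \ B) := (hD.prod hI).diff hB
  have hfibre : D \ Prod.fst '' B ⊆ {x | ν I ≤ ν (Prod.mk x ⁻¹' (D ×ˢ I \ B))} :=
    fun x ⟨hxD, hxB⟩ => measure_mono fun y hy => ⟨⟨hxD, hy⟩, fun hxy => hxB ⟨_, hxy, rfl⟩⟩
  calc μ (D \ Prod.fst '' B) * ν I ≤ ν I * μ {x | ν I ≤ ν (Prod.mk x ⁻¹' (D ×ˢ I \ B))} := by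
        rw [mul_comm]; gcongr
    _ ≤ ∫⁻ x, ν (Prod.mk x ⁻¹' (D ×ˢ I \ B)) ∂μ :=
        mul_meas_ge_le_lintegral (measurable_measure_prodMk_left hW) _
    _ = μ.prod ν (D ×ˢ I \ B) := (prod_apply hW).symm

theorem measure_inter_pos_of_measure_sdiff_add_lt {X : Type*} [MeasurableSpace X]
    {μ : Measure X} {D S T : Set X} (h : μ (D \ S) + μ (D \ T) < μ D) : 0 < μ (S ∩ T) := by
  refine pos_iff_ne_zero.2 fun h0 => h.not_ge ?_
  calc μ D ≤ μ ((D \ S) ∪ (D \ T) ∪ (S ∩ T)) := measure_mono fun x hx => by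
        by_cases hS : x ∈ S <;> by_cases hT : x ∈ T <;> simp [*]
    _ ≤ μ (D \ S) + μ (D \ T) + μ (S ∩ T) :=
        (measure_union_le _ _).trans (by gcongr; exact measure_union_le _ _)
    _ = μ (D \ S) + μ (D \ T) := by rw [h0, add_zero]

theorem Submodule.dist_le_dist_orthogonalProjectionOnto_add_dist {𝕜 E : Type*} [RCLike 𝕜]
    [NormedAddCommGroup E] [InnerProductSpace 𝕜 E] (K : Submodule 𝕜 E)
    [K.HasOrthogonalProjection] (x y : E) :
    dist x y ≤ dist (K.orthogonalProjectionOnto x) (K.orthogonalProjectionOnto y) +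
      dist (Kᗮ.orthogonalProjectionOnto x) (Kᗮ.orthogonalProjectionOnto y) := by
  simp only [dist_eq_norm, ← map_sub]
  calc ‖x - y‖ = ‖K.starProjection (x - y) + Kᗮ.starProjection (x - y)‖ := by
        rw [starProjection_add_starProjection_orthogonal]
    _ ≤ _ := norm_add_le _ _

section

variable {V : Type*} [NormedAddCommGroup V] [InnerProductSpace ℝ V] [FiniteDimensional ℝ V]
  [MeasurableSpace V] [BorelSpace V]

theorem hausdorffMeasure_finrank_pos_of_volume_pos {s : Set V} (hs : 0 < volume s) :
    0 < μH[finrank ℝ V] s := by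
  rw [← InnerProductSpace.euclideanHausdorffMeasure_eq_volume, euclideanHausdorffMeasure_def,
    Measure.smul_apply] at hs
  exact pos_iff_ne_zero.2 fun h => by simp [h] at hs

namespace Submodule

variable (K : Submodule ℝ V)

theorem measurePreserving_measurableEquivProd_volume :
    MeasurePreserving (K.measurableEquivProd (0 : V)) := by
  simpa only [InnerProductSpace.euclideanHausdorffMeasure_eq_volume] using
    K.measurePreserving_measurableEquivProd (0 : V)

theorem mem_preimage_measurableEquivProd_closedBall_prod {b x : V} {ρ : ℝ} :
    x ∈ K.measurableEquivProd (0 : V) ⁻¹'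
        (closedBall (K.orthogonalProjectionOnto b) ρ ×ˢ
          closedBall (Kᗮ.orthogonalProjectionOnto b) ρ) ↔
      dist (K.orthogonalProjectionOnto x) (K.orthogonalProjectionOnto b) ≤ ρ ∧
        dist (Kᗮ.orthogonalProjectionOnto x) (Kᗮ.orthogonalProjectionOnto b) ≤ ρ := by
  simp

theorem closedBall_subset_preimage_measurableEquivProd (b : V) (ρ : ℝ) :
    closedBall b ρ ⊆ K.measurableEquivProd (0 : V) ⁻¹'
      (closedBall (K.orthogonalProjectionOnto b) ρ ×ˢ
        closedBall (Kᗮ.orthogonalProjectionOnto b) ρ) := fun x hx =>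
  (K.mem_preimage_measurableEquivProd_closedBall_prod).2
    ⟨(K.lipschitzWith_orthogonalProjectionOnto.dist_le_mul x b).trans (by simpa using hx),
      (Kᗮ.lipschitzWith_orthogonalProjectionOnto.dist_le_mul x b).trans (by simpa using hx)⟩

theorem preimage_measurableEquivProd_subset_closedBall (b : V) (ρ : ℝ) :
    K.measurableEquivProd (0 : V) ⁻¹'
        (closedBall (K.orthogonalProjectionOnto b) ρ ×ˢ
          closedBall (Kᗮ.orthogonalProjectionOnto b) ρ) ⊆ closedBall b (2 * ρ) := fun x hx => by
  obtain ⟨hK, hKperp⟩ := (K.mem_preimage_measurableEquivProd_closedBall_prod).1 hx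
  exact (K.dist_le_dist_orthogonalProjectionOnto_add_dist x b).trans (by linarith)

end Submodule

theorem IsDensityPoint.eventually_measure_closedBall_sdiff_orthogonalProjectionOnto_image_le
    (K : Submodule ℝ V) {B : Set V} {b : V} (hb : IsDensityPoint volume B b)
    (hB : MeasurableSet B) {ε : ℝ≥0∞} (hε : ε ≠ 0) :
    ∀ᶠ ρ in 𝓝[>] 0, volume (closedBall (K.orthogonalProjectionOnto b) ρ \
        K.orthogonalProjectionOnto '' B) ≤
      ε * volume (closedBall (K.orthogonalProjectionOnto b) ρ) := by
  set Ψ := K.measurableEquivProd (0 : V)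
  have hΨ := K.measurePreserving_measurableEquivProd_volume
  set c : ℝ≥0∞ := ENNReal.ofReal (2 ^ finrank ℝ V)
  have hc : c ≠ ⊤ := ENNReal.ofReal_ne_top
  filter_upwards [eventually_nhdsGT_zero_mul_left two_pos
    (hb.eventually_measure_closedBall_sdiff_le hB (ε := ε / c) (by simp [hε, hc])),
    self_mem_nhdsWithin] with ρ hρ (hρ0 : 0 < ρ)
  set D := closedBall (K.orthogonalProjectionOnto b) ρ
  set I := closedBall (Kᗮ.orthogonalProjectionOnto b) ρ
  have hI0 : volume I ≠ 0 := (measure_closedBall_pos volume _ hρ0).ne'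
  have hI : volume I ≠ ⊤ := measure_closedBall_lt_top.ne
  have hshadow : Prod.fst '' (Ψ '' B) = K.orthogonalProjectionOnto '' B := by
    rw [image_image]; simp [Ψ]
  refine (ENNReal.mul_le_mul_iff_left hI0 hI).1 ?_
  calc volume (D \ K.orthogonalProjectionOnto '' B) * volume I
      ≤ volume.prod volume (D ×ˢ I \ Ψ '' B) := by
        rw [← hshadow]
        exact measure_sdiff_image_fst_mul_le _ _ (Ψ.measurableSet_image.2 hB)
          measurableSet_closedBall measurableSet_closedBall
    _ = volume (Ψ ⁻¹' (D ×ˢ I) \ B) := by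
        rw [← volume_eq_prod, ← hΨ.measure_preimage_equiv, preimage_sdiff, Ψ.preimage_image]
    _ ≤ volume (closedBall b (2 * ρ) \ B) := measure_mono <|
        sdiff_subset_sdiff_left (K.preimage_measurableEquivProd_subset_closedBall b ρ)
    _ ≤ ε / c * volume (closedBall b (2 * ρ)) := hρ
    _ = ε * volume (closedBall b ρ) := by
        rw [addHaar_closedBall_mul volume b zero_le_two hρ0.le, addHaar_closedBall_center volume b,
          ← mul_assoc, ENNReal.div_mul_cancel (by simp [c]) hc]
    _ ≤ ε * volume (Ψ ⁻¹' (D ×ˢ I)) := by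
        gcongr; exact K.closedBall_subset_preimage_measurableEquivProd b ρ
    _ = ε * volume D * volume I := by
        rw [hΨ.measure_preimage_equiv, volume_eq_prod, prod_prod, mul_assoc]

theorem hausdorffMeasure_orthogonalProjectionOnto_image_inter_pos (K : Submodule ℝ V)
    {A₁ A₂ : Set V} (hA₁ : MeasurableSet A₁) (hA₂ : MeasurableSet A₂) {a₁ a₂ : V}
    (hd₁ : IsDensityPoint volume A₁ a₁) (hd₂ : IsDensityPoint volume A₂ a₂)
    (ha : K.orthogonalProjectionOnto a₁ = K.orthogonalProjectionOnto a₂) :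
    0 < μH[finrank ℝ K] ((fun x => (K.orthogonalProjectionOnto x : V)) '' A₁ ∩
      (fun x => (K.orthogonalProjectionOnto x : V)) '' A₂) := by
  obtain ⟨ρ, h₁, h₂, hρ : 0 < ρ⟩ :=
    ((hd₁.eventually_measure_closedBall_sdiff_orthogonalProjectionOnto_image_le K hA₁
      (ε := 4⁻¹) (by simp)).and
    ((hd₂.eventually_measure_closedBall_sdiff_orthogonalProjectionOnto_image_le K hA₂
      (ε := 4⁻¹) (by simp)).and self_mem_nhdsWithin)).exists
  rw [← ha] at h₂
  set D := closedBall (K.orthogonalProjectionOnto a₁) ρ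
  have hshadows :
      0 < volume (K.orthogonalProjectionOnto '' A₁ ∩ K.orthogonalProjectionOnto '' A₂) := by
    refine measure_inter_pos_of_measure_sdiff_add_lt (D := D) ?_
    calc _ ≤ 4⁻¹ * volume D + 4⁻¹ * volume D := add_le_add h₁ h₂
      _ = volume D / 2 := by
          rw [← add_mul, show (4 : ℝ≥0∞) = 2 * 2 by norm_num, ENNReal.mul_inv (by simp) (by simp),
            ← mul_add, ENNReal.inv_two_add_inv_two, mul_one, mul_comm, div_eq_mul_inv]
      _ < volume D := ENNReal.half_lt_self (measure_closedBall_pos volume _ hρ).ne'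
          measure_closedBall_lt_top.ne
  simp only [← image_image Subtype.val K.orthogonalProjectionOnto]
  rw [← image_inter Subtype.val_injective,
    isometry_subtype_coe.hausdorffMeasure_image (Or.inl (Nat.cast_nonneg _))]
  exact hausdorffMeasure_finrank_pos_of_volume_pos hshadows

end

/-- If `a₁, a₂` are distinct Lebesgue density points of measurable sets
`A₁, A₂ ⊆ ℝⁿ` (`n ≥ 1`) and `v = (a₂ - a₁)/‖a₂ - a₁‖`, then the images of `A₁` and `A₂` under
the orthogonal projection onto `v⊥` intersect in a set of positive `(n-1)`-dimensional
Hausdorff measure. -/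
theorem stmt_5 (n : ℕ) (hn : 1 ≤ n) (A₁ A₂ : Set (EuclideanSpace ℝ (Fin n)))
    (hA₁ : MeasurableSet A₁) (hA₂ : MeasurableSet A₂)
    (a₁ a₂ : EuclideanSpace ℝ (Fin n)) (hne : a₁ ≠ a₂)
    (hd₁ : Tendsto (fun r : ℝ =>
        volume (A₁ ∩ Metric.closedBall a₁ r) / volume (Metric.closedBall a₁ r))
      (nhdsWithin 0 (Set.Ioi 0)) (nhds 1))
    (hd₂ : Tendsto (fun r : ℝ =>
        volume (A₂ ∩ Metric.closedBall a₂ r) / volume (Metric.closedBall a₂ r))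
      (nhdsWithin 0 (Set.Ioi 0)) (nhds 1)) :
    0 < μH[(n : ℝ) - 1]
      ((fun x => (Submodule.orthogonalProjectionOnto (ℝ ∙ (‖a₂ - a₁‖⁻¹ • (a₂ - a₁)))ᗮ x :
          EuclideanSpace ℝ (Fin n))) '' A₁ ∩
        (fun x => (Submodule.orthogonalProjectionOnto (ℝ ∙ (‖a₂ - a₁‖⁻¹ • (a₂ - a₁)))ᗮ x :
          EuclideanSpace ℝ (Fin n))) '' A₂) := by
  have hsub : a₂ - a₁ ≠ 0 := sub_ne_zero.2 hne.symm
  set L := ℝ ∙ (‖a₂ - a₁‖⁻¹ • (a₂ - a₁))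
  have hL : L = ℝ ∙ (a₂ - a₁) :=
    Submodule.span_singleton_smul_eq (inv_ne_zero (norm_ne_zero_iff.2 hsub)).isUnit _
  have hrank : finrank ℝ Lᗮ = n - 1 := by
    have hL1 : finrank ℝ L = 1 := hL ▸ finrank_span_singleton hsub
    have := L.finrank_add_finrank_orthogonal
    rw [hL1, finrank_euclideanSpace_fin] at this
    omega
  have ha : Lᗮ.orthogonalProjectionOnto a₁ = Lᗮ.orthogonalProjectionOnto a₂ := by
    rw [← sub_eq_zero, ← map_sub, Submodule.orthogonalProjectionOnto_eq_zero_iff,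
      Submodule.orthogonal_orthogonal, hL, Submodule.mem_span_singleton]
    exact ⟨-1, by simp⟩
  have := hausdorffMeasure_orthogonalProjectionOnto_image_inter_pos Lᗮ hA₁ hA₂ hd₁ hd₂ ha
  rwa [hrank, Nat.cast_sub hn, Nat.cast_one] at this
end

section
/- Let n ≥ 1, let A ⊆ ℝⁿ be a Lebesgue measurable set, and let x be a Lebesgue density point of A. Let v ∈ ℝⁿ be a unit vector, let H = v⊥ = {y ∈ ℝⁿ : ⟨y, v⟩ = 0}, and let p_v denote the orthogonal projection of ℝⁿ onto H. Then the part of the (n−1)-dimensional disk D_r = H ∩ B(p_v(x), r) not covered by the projection of A becomes negligible: ℋ^{n−1}(D_r \ p_v(A)) / ℋ^{n−1}(D_r) → 0 as r → 0⁺; equivalently, for every ε > 0 there is r₀ > 0 such that ℋ^{n−1}(D_r ∩ p_v(A)) ≥ (1 − ε) ℋ^{n−1}(D_r) for all 0 < r < r₀. -/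
/-! Identify `E` with `v⊥ × ℝ` through `(y, t) ↦ y + t • v`. By uniqueness of Haar measure, this
linear equivalence carries the product of a Haar measure on `v⊥` and Lebesgue measure on `ℝ` to a
constant multiple of the Haar measure of `E`. If `y` lies in the disk of radius `r` about `p_v x`
but not in `p_v(A)`, the whole segment `y + [t₀ - r, t₀ + r] • v` (where `x = p_v x + t₀ • v`)
misses `A` and stays in the ball `B(x, (1 + ‖v‖) r)`. So `2r` times the measure of the uncovered
part of the disk is at most a constant times `|B(x, (1 + ‖v‖) r) \ A|`; as both the disk and the
ball scale like powers of `r`, the uncovered fraction of the disk is bounded by a constant times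
the fraction of the ball missed by `A`, which tends to `0` at a density point. -/

open MeasureTheory Filter Metric Module Set

open scoped RealInnerProductSpace ENNReal NNReal Topology

theorem tendsto_measure_closedBall_diff_div_of_tendsto_measure_inter_div
    {X : Type*} [PseudoMetricSpace X] [ProperSpace X] [MeasurableSpace X]
    (μ : Measure X) [IsFiniteMeasureOnCompacts μ] [μ.IsOpenPosMeasure]
    {A : Set X} (hA : MeasurableSet A) {x : X}
    (hx : Tendsto (fun r ↦ μ (A ∩ closedBall x r) / μ (closedBall x r)) (𝓝[>] 0) (𝓝 1)) :
    Tendsto (fun r ↦ μ (closedBall x r \ A) / μ (closedBall x r)) (𝓝[>] 0) (𝓝 0) := by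
  have hlim : Tendsto (fun r ↦ 1 - μ (A ∩ closedBall x r) / μ (closedBall x r)) (𝓝[>] 0)
      (𝓝 (1 - 1)) :=
    ENNReal.Tendsto.sub tendsto_const_nhds hx (Or.inl ENNReal.one_ne_top)
  rw [tsub_self] at hlim
  refine hlim.congr' <| eventually_mem_nhdsWithin.mono fun r hr ↦ ?_
  have hB₀ : μ (closedBall x r) ≠ 0 := (measure_closedBall_pos μ x hr).ne'
  have hB : μ (closedBall x r) ≠ ∞ := measure_closedBall_lt_top.ne
  refine (ENNReal.eq_sub_of_add_eq (ENNReal.div_ne_top (measure_ne_top_of_subset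
    inter_subset_right hB) hB₀) ?_).symm
  rw [← ENNReal.add_div, inter_comm, measure_sdiff_add_inter _ hA, ENNReal.div_self hB₀ hB]

theorem exists_measure_mul_measure_eq_mul_measure_image_prod
    {F G E : Type*} [NormedAddCommGroup F] [NormedSpace ℝ F] [FiniteDimensional ℝ F]
    [MeasurableSpace F] [BorelSpace F] [NormedAddCommGroup G] [NormedSpace ℝ G]
    [FiniteDimensional ℝ G] [MeasurableSpace G] [BorelSpace G] [NormedAddCommGroup E]
    [NormedSpace ℝ E] [FiniteDimensional ℝ E] [MeasurableSpace E] [BorelSpace E]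
    (μF : Measure F) [μF.IsAddHaarMeasure] (μG : Measure G) [μG.IsAddHaarMeasure]
    (μ : Measure E) [μ.IsAddHaarMeasure] (e : (F × G) ≃L[ℝ] E) :
    ∃ c : ℝ≥0, ∀ s t, μF s * μG t = c * μ (⇑e '' (s ×ˢ t)) := by
  have := e.isAddHaarMeasure_map (μF.prod μG)
  obtain ⟨c, hmap⟩ : ∃ c : ℝ≥0, (μF.prod μG).map e = c • μ :=
    ⟨_, Measure.isAddLeftInvariant_eq_smul _ _⟩
  refine ⟨c, fun s t ↦ ?_⟩
  calc μF s * μG t = μF.prod μG (e ⁻¹' (e '' s ×ˢ t)) := by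
        rw [e.injective.preimage_image, Measure.prod_prod]
    _ = (μF.prod μG).map e (e '' s ×ˢ t) :=
        (e.toHomeomorph.measurableEmbedding.map_apply _ _).symm
    _ = _ := by rw [hmap]; rfl

section OrthogonalSpanSingleton

variable {E : Type*} [NormedAddCommGroup E] [InnerProductSpace ℝ E] [FiniteDimensional ℝ E]
  {v : E}

variable (v) in
noncomputable def orthogonalSpanSingletonProdEquiv (hv : v ≠ 0) : ((ℝ ∙ v)ᗮ × ℝ) ≃L[ℝ] E :=
  (((LinearEquiv.refl ℝ _).prodCongr (LinearEquiv.toSpanNonzeroSingleton ℝ E v hv)).trans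
    (Submodule.prodEquivOfIsCompl _ _
      (ℝ ∙ v).isCompl_orthogonal.symm)).toContinuousLinearEquiv

@[simp]
theorem orthogonalSpanSingletonProdEquiv_apply (hv : v ≠ 0) (p : (ℝ ∙ v)ᗮ × ℝ) :
    orthogonalSpanSingletonProdEquiv v hv p = p.1 + p.2 • v := by
  simp [orthogonalSpanSingletonProdEquiv]

@[simp]
theorem orthogonalProjectionOnto_orthogonalSpanSingletonProdEquiv (hv : v ≠ 0)
    (p : (ℝ ∙ v)ᗮ × ℝ) :
    (ℝ ∙ v)ᗮ.orthogonalProjectionOnto (orthogonalSpanSingletonProdEquiv v hv p) = p.1 := by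
  rw [orthogonalSpanSingletonProdEquiv_apply, map_add, map_smul,
    Submodule.orthogonalProjectionOnto_mem_subspace_eq_self,
    Submodule.orthogonalProjectionOnto_apply_of_mem_orthogonal
      (Submodule.le_orthogonal_orthogonal _ (Submodule.mem_span_singleton_self v)),
    smul_zero, add_zero]

theorem orthogonalSpanSingletonProdEquiv_image_subset (hv : v ≠ 0) (A : Set E)
    (y₀ : (ℝ ∙ v)ᗮ) (t₀ r : ℝ) :
    orthogonalSpanSingletonProdEquiv v hv ''
        ((closedBall y₀ r \ (ℝ ∙ v)ᗮ.orthogonalProjectionOnto '' A) ×ˢ Icc (t₀ - r) (t₀ + r)) ⊆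
      closedBall (orthogonalSpanSingletonProdEquiv v hv (y₀, t₀)) ((1 + ‖v‖) * r) \ A := by
  rintro _ ⟨⟨y, t⟩, ⟨⟨hy, hyA⟩, ht⟩, rfl⟩
  refine ⟨?_, fun hA ↦ hyA ⟨_, hA, orthogonalProjectionOnto_orthogonalSpanSingletonProdEquiv _ _⟩⟩
  have ht' : |t - t₀| ≤ r := abs_sub_le_iff.mpr ⟨by linarith [ht.2], by linarith [ht.1]⟩
  rw [mem_closedBall, dist_eq_norm, orthogonalSpanSingletonProdEquiv_apply,
    orthogonalSpanSingletonProdEquiv_apply]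
  calc ‖(y + t • v : E) - (y₀ + t₀ • v)‖ = ‖(y - y₀ : E) + (t - t₀) • v‖ := by
        rw [sub_smul]; abel_nf
    _ ≤ ‖(y - y₀ : E)‖ + |t - t₀| * ‖v‖ := by
        grw [norm_add_le, norm_smul, Real.norm_eq_abs]
    _ ≤ r + r * ‖v‖ := by
        gcongr
        exact mem_closedBall_iff_norm.mp hy
    _ = (1 + ‖v‖) * r := by ring

theorem finrank_orthogonal_span_singleton_add_one (hv : v ≠ 0) :
    finrank ℝ (ℝ ∙ v)ᗮ + 1 = finrank ℝ E := by
  rw [← Submodule.finrank_add_finrank_orthogonal (ℝ ∙ v), finrank_span_singleton hv, add_comm]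

variable [MeasurableSpace E] [BorelSpace E] (μ : Measure E) [μ.IsAddHaarMeasure]
  (μK : Measure (ℝ ∙ v)ᗮ) [μK.IsAddHaarMeasure]

theorem exists_measure_closedBall_diff_image_mul_le (hv : v ≠ 0) :
    ∃ c : ℝ≥0, ∀ (A : Set E) (x : E) (r : ℝ),
      μK (closedBall ((ℝ ∙ v)ᗮ.orthogonalProjectionOnto x) r \
          (ℝ ∙ v)ᗮ.orthogonalProjectionOnto '' A) * ENNReal.ofReal (2 * r) ≤
        c * μ (closedBall x ((1 + ‖v‖) * r) \ A) := by
  set e := orthogonalSpanSingletonProdEquiv v hv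
  obtain ⟨c, hc⟩ := exists_measure_mul_measure_eq_mul_measure_image_prod μK volume μ e
  refine ⟨c, fun A x r ↦ ?_⟩
  obtain ⟨⟨y₀, t₀⟩, rfl⟩ := e.surjective x
  calc _ = μK (closedBall y₀ r \ (ℝ ∙ v)ᗮ.orthogonalProjectionOnto '' A) *
        volume (Icc (t₀ - r) (t₀ + r)) := by
        rw [orthogonalProjectionOnto_orthogonalSpanSingletonProdEquiv, Real.volume_Icc]
        ring_nf
    _ ≤ c * μ (closedBall (e (y₀, t₀)) ((1 + ‖v‖) * r) \ A) := by
        rw [hc]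
        gcongr
        exact orthogonalSpanSingletonProdEquiv_image_subset hv A y₀ t₀ r

theorem exists_measure_closedBall_diff_image_div_le (hv : v ≠ 0) :
    ∃ C : ℝ≥0∞, C ≠ ∞ ∧ ∀ (A : Set E) (x : E) (r : ℝ), 0 < r →
      μK (closedBall ((ℝ ∙ v)ᗮ.orthogonalProjectionOnto x) r \
          (ℝ ∙ v)ᗮ.orthogonalProjectionOnto '' A) /
          μK (closedBall ((ℝ ∙ v)ᗮ.orthogonalProjectionOnto x) r) ≤
        C * (μ (closedBall x ((1 + ‖v‖) * r) \ A) / μ (closedBall x ((1 + ‖v‖) * r))) := by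
  obtain ⟨c, hc⟩ := exists_measure_closedBall_diff_image_mul_le μ μK hv
  set k := finrank ℝ (ℝ ∙ v)ᗮ
  set β := μK (closedBall 0 1)
  have hβ : 2 * β ≠ 0 := mul_ne_zero two_ne_zero (measure_closedBall_pos μK 0 one_pos).ne'
  have hβ' : 2 * β ≠ ∞ := ENNReal.mul_ne_top ENNReal.ofNat_ne_top measure_closedBall_lt_top.ne
  set M := ENNReal.ofReal ((1 + ‖v‖) ^ (k + 1)) * μ (closedBall 0 1)
  refine ⟨c * M / (2 * β), ENNReal.div_ne_top (ENNReal.mul_ne_top ENNReal.coe_ne_top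
    (ENNReal.mul_ne_top ENNReal.ofReal_ne_top measure_closedBall_lt_top.ne)) hβ, fun A x r hr ↦ ?_⟩
  set B := closedBall x ((1 + ‖v‖) * r)
  have hB : μ B = M * ENNReal.ofReal r * ENNReal.ofReal (r ^ k) := by
    rw [Measure.addHaar_closedBall' μ x (by positivity),
      ← finrank_orthogonal_span_singleton_add_one hv, mul_pow, pow_succ' r, ENNReal.ofReal_mul (by positivity), ENNReal.ofReal_mul hr.le]
    ring
  have hB₀ : μ B ≠ 0 := (measure_closedBall_pos μ x (by positivity)).ne'
  apply ENNReal.div_le_of_le_mul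
  rw [← ENNReal.mul_le_mul_iff_left (ENNReal.ofReal_pos.mpr (by positivity : 0 < 2 * r)).ne'
    ENNReal.ofReal_ne_top]
  have hfactor : ∀ q, c * q * μ B = c * M / (2 * β) * q * (ENNReal.ofReal (r ^ k) * β) *
      ENNReal.ofReal (2 * r) := fun q ↦ by
    rw [hB, ENNReal.ofReal_mul zero_le_two, ENNReal.ofReal_ofNat, div_eq_mul_inv,
      ← mul_one (c * q * _), ← ENNReal.inv_mul_cancel hβ hβ']
    ring
  calc _ ≤ c * μ (B \ A) := hc A x r
    _ = c * (μ (B \ A) / μ B) * μ B := by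
        rw [mul_assoc, ENNReal.div_mul_cancel hB₀ measure_closedBall_lt_top.ne]
    _ = _ := by rw [hfactor, Measure.addHaar_closedBall' μK _ hr.le]

theorem tendsto_measure_closedBall_diff_orthogonalProjection_image_div (hv : v ≠ 0)
    {A : Set E} (hA : MeasurableSet A) {x : E}
    (hx : Tendsto (fun r ↦ μ (A ∩ closedBall x r) / μ (closedBall x r)) (𝓝[>] 0) (𝓝 1)) :
    Tendsto (fun r ↦ μK (closedBall ((ℝ ∙ v)ᗮ.orthogonalProjectionOnto x) r \
        (ℝ ∙ v)ᗮ.orthogonalProjectionOnto '' A) /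
        μK (closedBall ((ℝ ∙ v)ᗮ.orthogonalProjectionOnto x) r)) (𝓝[>] 0) (𝓝 0) := by
  obtain ⟨C, hC, hle⟩ := exists_measure_closedBall_diff_image_div_le μ μK hv
  have hscale : Tendsto (fun r ↦ (1 + ‖v‖) * r) (𝓝[>] 0) (𝓝[>] 0) := by
    simpa using TendstoNhdsWithinIoi.const_mul (by positivity : (0 : ℝ) < 1 + ‖v‖)
      (tendsto_id (x := 𝓝[>] (0 : ℝ)))
  have hlim := ENNReal.Tendsto.const_mul
    ((tendsto_measure_closedBall_diff_div_of_tendsto_measure_inter_div μ hA hx).comp hscale)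
    (Or.inr hC)
  rw [mul_zero] at hlim
  exact tendsto_of_tendsto_of_tendsto_of_le_of_le' tendsto_const_nhds hlim
    (Eventually.of_forall fun _ ↦ bot_le)
    (eventually_mem_nhdsWithin.mono fun r hr ↦ hle A x r hr)

end OrthogonalSpanSingleton

theorem stmt_8_general (n : ℕ) (A : Set (EuclideanSpace ℝ (Fin n)))
    (hA : MeasurableSet A) (x : EuclideanSpace ℝ (Fin n))
    (hx : Tendsto (fun r : ℝ =>
        volume (A ∩ Metric.closedBall x r) / volume (Metric.closedBall x r))
      (nhdsWithin 0 (Set.Ioi 0)) (nhds 1))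
    (v : EuclideanSpace ℝ (Fin n)) (hv : ‖v‖ = 1)
    (pv : EuclideanSpace ℝ (Fin n) → EuclideanSpace ℝ (Fin n))
    (hpv : pv = fun y => (Submodule.orthogonalProjectionOnto (ℝ ∙ v)ᗮ y : EuclideanSpace ℝ (Fin n))) :
    Tendsto (fun r : ℝ =>
        μH[(n : ℝ) - 1]
            (({y : EuclideanSpace ℝ (Fin n) | ⟪y, v⟫ = 0} ∩ Metric.closedBall (pv x) r) \
              pv '' A) /
          μH[(n : ℝ) - 1]
            ({y : EuclideanSpace ℝ (Fin n) | ⟪y, v⟫ = 0} ∩ Metric.closedBall (pv x) r))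
      (nhdsWithin 0 (Set.Ioi 0)) (nhds 0) := by
  subst hpv
  set K := (ℝ ∙ v)ᗮ
  have hv₀ : v ≠ 0 := by rintro rfl; simp at hv
  have hdim : (n : ℝ) - 1 = finrank ℝ K := by
    have h := finrank_orthogonal_span_singleton_add_one hv₀
    rw [finrank_euclideanSpace_fin] at h
    linarith [(by exact_mod_cast h : (finrank ℝ K : ℝ) + 1 = n)]
  have hdisk : ∀ r, {y | ⟪y, v⟫ = 0} ∩ closedBall (K.orthogonalProjectionOnto x : _) r =
      Subtype.val '' closedBall (K.orthogonalProjectionOnto x) r := fun r ↦ by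
    rw [Subtype.image_closedBall, inter_comm]
    congr 1
    ext y
    exact Submodule.mem_orthogonal_singleton_iff_inner_left.symm
  refine (tendsto_measure_closedBall_diff_orthogonalProjection_image_div volume
    μH[finrank ℝ K] hv₀ hA hx).congr fun r ↦ ?_
  rw [hdim, hdisk, ← image_image Subtype.val K.orthogonalProjectionOnto A,
    ← image_sdiff Subtype.val_injective,
    isometry_subtype_coe.hausdorffMeasure_image (Or.inl (Nat.cast_nonneg _)),
    isometry_subtype_coe.hausdorffMeasure_image (Or.inl (Nat.cast_nonneg _))]

/-- At a Lebesgue density point `x` of a measurable set `A ⊆ ℝⁿ` (`n ≥ 1`),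
for any unit vector `v`, the fraction of the `(n-1)`-disk
`D_r = v⊥ ∩ B(p_v(x), r)` not covered by the projection `p_v(A)` tends to `0` as `r → 0⁺`
(computed with `(n-1)`-dimensional Hausdorff measure). -/
theorem stmt_8 (n : ℕ) (hn : 1 ≤ n) (A : Set (EuclideanSpace ℝ (Fin n)))
    (hA : MeasurableSet A) (x : EuclideanSpace ℝ (Fin n))
    (hx : Tendsto (fun r : ℝ =>
        volume (A ∩ Metric.closedBall x r) / volume (Metric.closedBall x r))
      (nhdsWithin 0 (Set.Ioi 0)) (nhds 1))
    (v : EuclideanSpace ℝ (Fin n)) (hv : ‖v‖ = 1)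
    (pv : EuclideanSpace ℝ (Fin n) → EuclideanSpace ℝ (Fin n))
    (hpv : pv = fun y => (Submodule.orthogonalProjectionOnto (ℝ ∙ v)ᗮ y : EuclideanSpace ℝ (Fin n))) :
    Tendsto (fun r : ℝ =>
        μH[(n : ℝ) - 1]
            (({y : EuclideanSpace ℝ (Fin n) | ⟪y, v⟫ = 0} ∩ Metric.closedBall (pv x) r) \
              pv '' A) /
          μH[(n : ℝ) - 1]
            ({y : EuclideanSpace ℝ (Fin n) | ⟪y, v⟫ = 0} ∩ Metric.closedBall (pv x) r))
      (nhdsWithin 0 (Set.Ioi 0)) (nhds 0) :=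
  stmt_8_general n A hA x hx v hv pv hpv
end
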